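/- arXiv:1609.04313 — 4 statements merged into one kernel-verified Lean document; each statement's English description precedes it below -/
import Mathlib

section
/- Fix a real η > 1 and integers m ≥ 1 and j₀ ≥ 1, let p_i denote the i-th prime, and for j ∈ ℕ≥1 set r_j := √(m + ∏_{j₀ ≤ i ≤ 2^{j^η}} p_i) and R := {r_j : j ∈ ℕ≥1}. Then R is lacunary, and there exist sets of primes G and B (not necessarily disjoint) with G ∪ B = all primes such that: (G1) for each prime p ∈ G and each j, the residue r_j² mod p is a unit of ℤ/pℤ; (G2) for every ε > 0 there is C_ε (independent of p) such that #{r_j² mod p : j ∈ ℕ≥1} ≤ C_ε·p^ε for all p ∈ G; and (B) ∑_{p ∈ B} p^{−1} < ∞. -/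
open scoped ENNReal NNReal BigOperators
open MeasureTheory

noncomputable section

/-- `e(t) = exp(2πit)`. -/
def eC (t : ℝ) : ℂ := Complex.exp (2 * Real.pi * Complex.I * t)

/-- `|x|²` for `x ∈ ℤ^d`. -/
def normSqZ {d : ℕ} (x : Fin d → ℤ) : ℤ := ∑ i, (x i) ^ 2

/-- The natural number `r²` of an admissible radius `r`. -/
def radSq (r : ℝ) : ℕ := ⌊r ^ 2⌋₊

/-- `r` is an admissible radius: `r > 0` and `r² ∈ ℕ`. -/
def IsAdmissible (r : ℝ) : Prop := 0 < r ∧ ∃ n : ℕ, r ^ 2 = (n : ℝ)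

/-- A set of positive reals is lacunary. -/
def Lacunary (R : Set ℝ) : Prop := ∃ c : ℝ, 1 < c ∧ ∀ r ∈ R, ∀ s ∈ R, r < s → c * r ≤ s

/-- `N_d(r)`: the number of lattice points on the sphere of radius `r` in `ℤ^d`. -/
def sphereCount (d : ℕ) (r : ℝ) : ℕ := Nat.card {x : Fin d → ℤ // normSqZ x = (radSq r : ℤ)}

/-- The discrete spherical average `A_r f`. -/
def sphAvg (d : ℕ) (r : ℝ) (f : (Fin d → ℤ) → ℂ) (x : Fin d → ℤ) : ℂ :=
  (sphereCount d r : ℂ)⁻¹ *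
    ∑' y : Fin d → ℤ, if normSqZ y = (radSq r : ℤ) then f (x - y) else 0

/-- The `ℓ^p(ℤ^d)` norm, valued in `ℝ≥0∞`. -/
def lpNorm (d : ℕ) (p : ℝ) (f : (Fin d → ℤ) → ℂ) : ℝ≥0∞ :=
  (∑' x : Fin d → ℤ, (‖f x‖₊ : ℝ≥0∞) ^ p) ^ (1 / p)

/-- `(G, B)` is an admissible good/bad prime dichotomy for the set of radii `R`,
with parameter `s`. -/
def GoodBadDichotomy (R : Set ℝ) (G B : Set ℕ) (s : ℝ) : Prop :=
  (∀ p : ℕ, p.Prime → p ∈ G ∪ B) ∧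
  (∀ p ∈ G, Nat.Prime p) ∧
  (∀ p ∈ B, Nat.Prime p) ∧
  (∀ p ∈ G, ∀ r ∈ R, IsUnit ((radSq r : ZMod p))) ∧
  (∀ ε : ℝ, 0 < ε → ∃ C : ℝ, 0 < C ∧ ∀ p ∈ G,
    (({z : ZMod p | ∃ r ∈ R, z = (radSq r : ZMod p)}.ncard : ℝ)) ≤ C * (p : ℝ) ^ ε) ∧
  Summable (fun q : B => (q : ℝ) ^ (-s))

/-- `∏_{i ≤ T} p_i`, the product of the first `⌊T⌋` primes. -/
def primorialUpTo (T : ℝ) : ℕ := ∏ i ∈ Finset.range ⌊T⌋₊, Nat.nth Nat.Prime i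

/-- `∏_{j₀ ≤ i ≤ T} p_i` where `p_i` is the `i`-th prime (`1`-indexed). -/
def prodPrimesFrom (j₀ : ℕ) (T : ℝ) : ℕ :=
  ∏ i ∈ Finset.Icc j₀ ⌊T⌋₊, Nat.nth Nat.Prime (i - 1)

/-- `n_j = 1 + ∏_{i ≤ 2^{j^η}} p_i`. -/
def nseq (η : ℝ) (j : ℕ) : ℕ := 1 + primorialUpTo ((2 : ℝ) ^ ((j : ℝ) ^ η))

/-- The normalized Kloosterman sum `K(q, N; n)`. -/
def kloosterman (d q : ℕ) (N : ℤ) (n : Fin d → ℤ) : ℂ :=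
  ((q : ℂ)⁻¹) ^ d *
    ∑ u : Fin q,
      if Nat.Coprime (u : ℕ) q then
        eC (-(((u : ℕ) : ℝ) * (N : ℝ)) / q) *
          ∑ b : Fin d → Fin q,
            eC ((((u : ℕ) : ℝ) * ∑ i, (((b i : ℕ) : ℝ)) ^ 2
                + ∑ i, ((b i : ℕ) : ℝ) * ((n i : ℝ))) / q)
      else 0

/-- The Ramanujan sum `c_q(N)`. -/
def ramanujanSum (q : ℕ) (N : ℤ) : ℂ :=
  ∑ u : Fin q, if Nat.Coprime (u : ℕ) q then eC ((((u : ℕ) : ℝ) * (N : ℝ)) / q) else 0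

/-- The measure `dσ_r = (2 r^{d-1})⁻¹ ℋ^{d-1} ⌞ {|x| = r}` on `ℝ^d`. -/
def sphMeasure (d : ℕ) (r : ℝ) : Measure (EuclideanSpace ℝ (Fin d)) :=
  (ENNReal.ofReal (2 * r ^ (d - 1)))⁻¹ •
    (μH[((d : ℝ) - 1)] : Measure (EuclideanSpace ℝ (Fin d))).restrict (Metric.sphere 0 r)

/-- The Fourier transform `𝓕dσ_r(ξ) = ∫ e(x·ξ) dσ_r(x)`. -/
def fourierSphMeasure (d : ℕ) (r : ℝ) (ξ : Fin d → ℝ) : ℂ :=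
  ∫ x : EuclideanSpace ℝ (Fin d), eC (∑ i, x i * ξ i) ∂(sphMeasure d r)

/-- `Ψ` is a smooth bump: supported in `[-1/4,1/4]^d` and `1` on `[-1/8,1/8]^d`. -/
def IsBump (d : ℕ) (Ψ : (Fin d → ℝ) → ℝ) : Prop :=
  ContDiff ℝ (⊤ : ℕ∞) Ψ ∧
  (∀ x, x ∉ Set.Icc (fun _ => -(1/4 : ℝ)) (fun _ => (1/4 : ℝ)) → Ψ x = 0) ∧
  (∀ x ∈ Set.Icc (fun _ => -(1/8 : ℝ)) (fun _ => (1/8 : ℝ)), Ψ x = 1)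

/-- `Ψ'` is a smooth cutoff with `1_{[-1/4,1/4]^d} ≤ Ψ' ≤ 1_{[-1/2,1/2]^d}`. -/
def IsCutoff (d : ℕ) (Ψ' : (Fin d → ℝ) → ℝ) : Prop :=
  ContDiff ℝ (⊤ : ℕ∞) Ψ' ∧
  (∀ x, Set.indicator (Set.Icc (fun _ => -(1/4 : ℝ)) (fun _ => (1/4 : ℝ)))
      (fun _ => (1 : ℝ)) x ≤ Ψ' x) ∧
  (∀ x, Ψ' x ≤ Set.indicator (Set.Icc (fun _ => -(1/2 : ℝ)) (fun _ => (1/2 : ℝ)))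
      (fun _ => (1 : ℝ)) x)

/-- The Fourier transform of `f : ℤ^d → ℂ`, `f̂(ξ) = ∑_n f(n) e(n·ξ)`. -/
def ftZ {d : ℕ} (f : (Fin d → ℤ) → ℂ) (ξ : Fin d → ℝ) : ℂ :=
  ∑' n : Fin d → ℤ, f n * eC (∑ i, (n i : ℝ) * ξ i)

/-- The Fourier multiplier operator on `ℤ^d` with 1-periodic multiplier `m`. -/
def mulOp (d : ℕ) (m : (Fin d → ℝ) → ℂ) (f : (Fin d → ℤ) → ℂ) (x : Fin d → ℤ) : ℂ :=
  ∫ ξ in Set.Icc (0 : Fin d → ℝ) 1, m ξ * ftZ f ξ * eC (-∑ i, (x i : ℝ) * ξ i)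

/-- The multiplier of `H^q_r`. -/
def mHqr (d q : ℕ) (r : ℝ) (Ψ : (Fin d → ℝ) → ℝ) (ξ : Fin d → ℝ) : ℂ :=
  ∑' n : Fin d → ℤ,
    kloosterman d q ((radSq r : ℤ)) n * ((Ψ (fun i => (q : ℝ) * ξ i - (n i : ℝ)) : ℝ) : ℂ) *
      fourierSphMeasure d r (fun i => ξ i - (n i : ℝ) / q)

/-- The multiplier of `U^{1,q}_r` for `q = q₁q₂`. -/
def mU1 (d q₁ q₂ : ℕ) (r : ℝ) (Ψ' : (Fin d → ℝ) → ℝ) (ξ : Fin d → ℝ) : ℂ :=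
  ∑' n : Fin d → ℤ,
    kloosterman d q₁ ((radSq r : ℤ)) n *
      ((Ψ' (fun i => ((q₁ * q₂ : ℕ) : ℝ) * ξ i - (n i : ℝ)) : ℝ) : ℂ)

/-- The `ℓ^p(ℤ^d) → ℓ^p(ℤ^d)` operator norm (as a supremum over finitely supported
functions in the unit ball). -/
def opNormLp (d : ℕ) (p : ℝ) (T : ((Fin d → ℤ) → ℂ) → ((Fin d → ℤ) → ℂ)) : ℝ≥0∞ :=
  ⨆ f : {f : (Fin d → ℤ) → ℂ // (Function.support f).Finite ∧ lpNorm d p f ≤ 1},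
    lpNorm d p (T f.1)

/-- `𝓕Ψ_q(ζ) = ∫_{ℝ^d} Ψ(qy) e(y·ζ) dy`. -/
def ftPsiQ (d q : ℕ) (Ψ : (Fin d → ℝ) → ℝ) (ζ : Fin d → ℝ) : ℂ :=
  ∫ y : Fin d → ℝ, ((Ψ (fun i => (q : ℝ) * y i) : ℝ) : ℂ) * eC (∑ i, y i * ζ i)

/-- The kernel `K^q_r(x) = c_q(r² - |x|²) · ((𝓕Ψ_q) * dσ_r)(x)`. -/
def kernelK (d q : ℕ) (r : ℝ) (Ψ : (Fin d → ℝ) → ℝ) (x : Fin d → ℤ) : ℂ :=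
  ramanujanSum q ((radSq r : ℤ) - normSqZ x) *
    ∫ y : EuclideanSpace ℝ (Fin d), ftPsiQ d q Ψ (fun i => ((x i : ℝ)) - y i) ∂(sphMeasure d r)

/-- Discrete convolution on `ℤ^d`. -/
def dconv {d : ℕ} (f g : (Fin d → ℤ) → ℂ) (x : Fin d → ℤ) : ℂ :=
  ∑' y : Fin d → ℤ, f y * g (x - y)

/-- `Ã_r f = f * σ_r` with `σ_r = r^{2-d} 1_{sphere}`. -/
def tildeAvg (d : ℕ) (r : ℝ) (f : (Fin d → ℤ) → ℂ) (x : Fin d → ℤ) : ℂ :=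
  (r : ℂ) ^ ((2 : ℤ) - (d : ℤ)) *
    ∑' y : Fin d → ℤ, if normSqZ y = (radSq r : ℤ) then f (x - y) else 0

/-- The error operator `E_r f = Ã_r f - ∑_{1 ≤ q ≤ r} C^q_r f`. -/
def errOp (d : ℕ) (r : ℝ) (Ψ : (Fin d → ℝ) → ℝ) (f : (Fin d → ℤ) → ℂ) (x : Fin d → ℤ) : ℂ :=
  tildeAvg d r f x - ∑ q ∈ Finset.Icc 1 ⌊r⌋₊, dconv f (kernelK d q r Ψ) x

/-- The Euclidean norm `|x|` of `x ∈ ℤ^d`. -/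
def euclNormZ {d : ℕ} (x : Fin d → ℤ) : ℝ := Real.sqrt (∑ i, ((x i : ℝ)) ^ 2)

/-!
Write `P_j` for the product of the primes `p_i`, `j₀ ≤ i ≤ 2^{j^η}`, so that `r_j² = m + P_j`.
The `P_j` form a divisibility chain, so two distinct ones differ by a factor at least `2`; this
gives lacunarity with ratio `√((m + 2) / (m + 1))`.

Every prime `p ≥ p_{j₀}` below `2^j` divides `P_j`, hence `r_j² ≡ m (mod p)` once `j > log₂ p`,
and `r_j² mod p` takes at most `p_{j₀} + 1 + log₂ p` values.

The good primes are those dividing no `r_j²`. A bad prime `q > p_{j₀} + m` dividing `r_j²`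
divides neither `m` nor `P_j`, so `q ≥ b_j`, the first prime after those of `P_j`, and
`b_j > 2^{j^η}`. As `r_j² ≤ (4(m + 1))^{b_j}` by Chebyshev's bound `n# ≤ 4^n`, there are at most
`b_j log(4(m + 1)) / log b_j` such `q`, so their reciprocals sum to at most
`log(4(m + 1)) / (j^η log 2)`, which is summable since `η > 1`.
-/

theorem lacunary_of_subset_range_sqrt {ι : Type*} {R : Set ℝ} (m : ℕ) {P : ι → ℕ}
    (hP : ∀ i, 0 < P i) (hchain : ∀ i j, P i ∣ P j ∨ P j ∣ P i)
    (hR : R ⊆ Set.range fun i => √((m : ℝ) + P i)) : Lacunary R := by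
  have hm : (0 : ℝ) ≤ m := m.cast_nonneg
  refine ⟨√((m + 2) / (m + 1)), ?_, ?_⟩
  · rw [Real.lt_sqrt zero_le_one, one_pow, one_lt_div (by positivity)]
    linarith
  rintro _ hr _ hs hrs
  obtain ⟨i, rfl⟩ := hR hr
  obtain ⟨j, rfl⟩ := hR hs
  have hlt : P i < P j := by
    have := (Real.sqrt_lt_sqrt_iff (by positivity)).mp hrs
    exact_mod_cast (by linarith : (P i : ℝ) < P j)
  obtain ⟨d, hd⟩ := (hchain i j).resolve_right fun h => (Nat.le_of_dvd (hP i) h).not_gt hlt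
  have hd2 : 2 ≤ d := by
    rcases d with _ | _ | d <;> simp_all
  have h2 : 2 * (P i : ℝ) ≤ P j := by
    exact_mod_cast (show 2 * P i ≤ P j by rw [hd]; nlinarith)
  have h1 : (1 : ℝ) ≤ P i := by exact_mod_cast hP i
  rw [← Real.sqrt_mul (by positivity)]
  apply Real.sqrt_le_sqrt
  rw [div_mul_eq_mul_div, div_le_iff₀ (by positivity)]
  nlinarith

theorem sum_one_div_primeFactors_ge_le {n b : ℕ} {c : ℝ} (hn : n ≠ 0) (hb : 1 < b)
    (hnc : (n : ℝ) ≤ c ^ b) :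
    ∑ q ∈ n.primeFactors with b ≤ q, (1 : ℝ) / q ≤ Real.log c / Real.log b := by
  set S := {q ∈ n.primeFactors | b ≤ q}
  have hb0 : (0 : ℝ) < b := by positivity
  have hlogb : 0 < Real.log b := Real.log_pos (by exact_mod_cast hb)
  have hpow : b ^ S.card ≤ n :=
    (Finset.pow_card_le_prod _ _ _ fun q hq => (Finset.mem_filter.mp hq).2).trans <|
      Nat.le_of_dvd (Nat.pos_of_ne_zero hn) <|
        (Finset.prod_dvd_prod_of_subset _ _ _ (Finset.filter_subset _ _)).trans
          (Nat.prod_primeFactors_dvd n)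
  have hcard : S.card * Real.log b ≤ b * Real.log c := by
    have hpowR : (b : ℝ) ^ S.card ≤ c ^ b :=
      (by exact_mod_cast hpow : (b : ℝ) ^ S.card ≤ n).trans hnc
    have := Real.log_le_log (by positivity) hpowR
    rwa [Real.log_pow, Real.log_pow] at this
  calc ∑ q ∈ S, (1 : ℝ) / q ≤ S.card • (1 / (b : ℝ)) :=
        Finset.sum_le_card_nsmul S _ _ fun q hq =>
          one_div_le_one_div_of_le hb0 (by exact_mod_cast (Finset.mem_filter.mp hq).2)
    _ ≤ Real.log c / Real.log b := by
        rw [nsmul_eq_mul, le_div_iff₀ hlogb, mul_one_div, div_mul_eq_mul_div, div_le_iff₀ hb0]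
        linarith

theorem summable_indicator_iUnion_of_sum_le {ι α : Type*} {f : α → ℝ} (hf : 0 ≤ f)
    {S : ι → Finset α} {a : ι → ℝ} (ha : Summable a) (hS : ∀ i, ∑ x ∈ S i, f x ≤ a i) :
    Summable ((⋃ i, (S i : Set α)).indicator f) := by
  classical
  rcases isEmpty_or_nonempty ι with _ | _
  · simp [summable_zero]
  have ha0 : 0 ≤ a := fun i => (Finset.sum_nonneg fun x _ => hf x).trans (hS i)
  choose! idx hidx using fun x (hx : x ∈ ⋃ i, (S i : Set α)) => Set.mem_iUnion.mp hx
  refine summable_of_sum_le (c := ∑' i, a i) (Set.indicator_nonneg fun x _ => hf x) fun u => ?_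
  set v := {x ∈ u | x ∈ ⋃ i, (S i : Set α)}
  calc ∑ x ∈ u, (⋃ i, (S i : Set α)).indicator f x = ∑ x ∈ v, f x :=
        (Finset.sum_filter _ _).symm
    _ = ∑ i ∈ v.image idx, ∑ x ∈ v with idx x = i, f x :=
        (Finset.sum_fiberwise_of_maps_to (fun x hx => Finset.mem_image_of_mem idx hx) f).symm
    _ ≤ ∑ i ∈ v.image idx, a i := Finset.sum_le_sum fun i _ => by
        refine (Finset.sum_le_sum_of_subset_of_nonneg (fun x hx => ?_) fun x _ _ => hf x).trans
          (hS i)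
        obtain ⟨hxv, rfl⟩ := Finset.mem_filter.mp hx
        exact hidx x (Finset.mem_filter.mp hxv).2
    _ ≤ ∑' i, a i := ha.sum_le_tsum _ fun i _ => ha0 i

theorem ncard_setOf_exists_eq_le {α : Type*} (f : ℕ → α) (c : α) (L : ℕ)
    (h : ∀ j, L < j → f j = c) : {z | ∃ j, 1 ≤ j ∧ z = f j}.ncard ≤ L + 1 := by
  classical
  have hsub : {z | ∃ j, 1 ≤ j ∧ z = f j} ⊆ ↑(insert c ((Finset.Icc 1 L).image f)) := by
    rintro _ ⟨j, hj, rfl⟩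
    by_cases hjL : j ≤ L
    · exact Finset.mem_insert_of_mem (Finset.mem_image_of_mem f (Finset.mem_Icc.mpr ⟨hj, hjL⟩))
    · rw [h j (by omega)]
      exact Finset.mem_insert_self _ _
  calc _ ≤ (insert c ((Finset.Icc 1 L).image f)).card :=
        (Set.ncard_le_ncard hsub (Finset.finite_toSet _)).trans_eq (Set.ncard_coe_finset _)
    _ ≤ ((Finset.Icc 1 L).image f).card + 1 := Finset.card_insert_le _ _
    _ ≤ L + 1 := by simpa using Finset.card_image_le (s := Finset.Icc 1 L) (f := f)

theorem add_natLog_two_le_mul_rpow {ε : ℝ} (hε : 0 < ε) {A : ℝ} (hA : 0 ≤ A) {n : ℕ} (hn : 1 ≤ n) :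
    A + Nat.log 2 n ≤ (A + 1 / (ε * Real.log 2)) * (n : ℝ) ^ ε := by
  have hlog2 : 0 < Real.log 2 := Real.log_pos one_lt_two
  have hnε : 1 ≤ (n : ℝ) ^ ε := Real.one_le_rpow (by exact_mod_cast hn) hε.le
  have hlog : (Nat.log 2 n : ℝ) ≤ (n : ℝ) ^ ε / (ε * Real.log 2) :=
    calc (Nat.log 2 n : ℝ) ≤ Real.log n / Real.log 2 := by exact_mod_cast Real.natLog_le_logb n 2
      _ ≤ (n : ℝ) ^ ε / ε / Real.log 2 := by gcongr; exact Real.log_natCast_le_rpow_div n hε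
      _ = (n : ℝ) ^ ε / (ε * Real.log 2) := by rw [div_div]
  calc A + Nat.log 2 n ≤ A * (n : ℝ) ^ ε + (n : ℝ) ^ ε / (ε * Real.log 2) :=
        add_le_add (le_mul_of_one_le_right hA hnε) hlog
    _ = _ := by ring

theorem lt_nth_prime_floor (T : ℝ) : T < Nat.nth Nat.Prime ⌊T⌋₊ := by
  have := Nat.add_two_le_nth_prime ⌊T⌋₊
  calc T < ⌊T⌋₊ + 1 := Nat.lt_floor_add_one T
    _ ≤ Nat.nth Nat.Prime ⌊T⌋₊ := by exact_mod_cast (by omega : ⌊T⌋₊ + 1 ≤ Nat.nth Nat.Prime ⌊T⌋₊)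

theorem prodPrimesFrom_pos (j₀ : ℕ) (T : ℝ) : 0 < prodPrimesFrom j₀ T :=
  Finset.prod_pos fun _ _ => (Nat.prime_nth_prime _).pos

theorem prodPrimesFrom_dvd_of_le (j₀ : ℕ) {T T' : ℝ} (h : T ≤ T') :
    prodPrimesFrom j₀ T ∣ prodPrimesFrom j₀ T' :=
  Finset.prod_dvd_prod_of_subset _ _ _ (Finset.Icc_subset_Icc_right (Nat.floor_le_floor h))

theorem prime_dvd_prodPrimesFrom (j₀ : ℕ) (T : ℝ) {p : ℕ} (hp : p.Prime)
    (hlo : Nat.nth Nat.Prime (j₀ - 1) ≤ p) (hhi : p < Nat.nth Nat.Prime ⌊T⌋₊) :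
    p ∣ prodPrimesFrom j₀ T := by
  have hk := Nat.nth_count hp
  rw [← hk, Nat.nth_le_nth Nat.infinite_setOfPred_prime] at hlo
  rw [← hk, Nat.nth_lt_nth Nat.infinite_setOfPred_prime] at hhi
  have hmem : Nat.count Nat.Prime p + 1 ∈ Finset.Icc j₀ ⌊T⌋₊ := Finset.mem_Icc.mpr ⟨by omega, hhi⟩
  rw [prodPrimesFrom]
  simpa [hk] using Finset.dvd_prod_of_mem (fun i => Nat.nth Nat.Prime (i - 1)) hmem

theorem prodPrimesFrom_dvd_primorial {j₀ : ℕ} (hj₀ : 1 ≤ j₀) (T : ℝ) :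
    prodPrimesFrom j₀ T ∣ primorial (Nat.nth Nat.Prime ⌊T⌋₊) := by
  have hinj : Set.InjOn (fun i => Nat.nth Nat.Prime (i - 1)) (Finset.Icc j₀ ⌊T⌋₊) := by
    intro a ha b hb hab
    simp only [Finset.coe_Icc, Set.mem_Icc] at ha hb
    have := Nat.nth_injective Nat.infinite_setOfPred_prime hab
    omega
  rw [prodPrimesFrom, ← Finset.prod_image (f := fun q => q) hinj]
  refine Finset.prod_dvd_prod_of_subset _ _ _ fun q hq => ?_
  obtain ⟨i, hi, rfl⟩ := Finset.mem_image.mp hq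
  have hi' := Finset.mem_Icc.mp hi
  refine Finset.mem_filter.mpr ⟨Finset.mem_range.mpr (Nat.lt_succ_of_le ?_), Nat.prime_nth_prime _⟩
  exact (Nat.nth_le_nth Nat.infinite_setOfPred_prime).mpr (by omega)

theorem add_prodPrimesFrom_le_pow (m : ℕ) {j₀ : ℕ} (hj₀ : 1 ≤ j₀) (T : ℝ) :
    m + prodPrimesFrom j₀ T ≤ (4 * (m + 1)) ^ Nat.nth Nat.Prime ⌊T⌋₊ := by
  set b := Nat.nth Nat.Prime ⌊T⌋₊
  have hb : b ≠ 0 := (Nat.prime_nth_prime _).ne_zero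
  have hP : prodPrimesFrom j₀ T ≤ 4 ^ b :=
    (Nat.le_of_dvd (primorial_pos _) (prodPrimesFrom_dvd_primorial hj₀ T)).trans
      (primorial_le_four_pow b)
  calc m + prodPrimesFrom j₀ T ≤ (m + 1) * 4 ^ b := by nlinarith [Nat.one_le_pow b 4 (by norm_num)]
    _ ≤ (m + 1) ^ b * 4 ^ b := Nat.mul_le_mul_right _ (Nat.le_self_pow hb _)
    _ = (4 * (m + 1)) ^ b := by rw [mul_pow, mul_comm]

theorem prime_dvd_add_prodPrimesFrom_le_or_ge {m : ℕ} (hm : 1 ≤ m) (j₀ : ℕ) (T : ℝ) {p : ℕ}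
    (hp : p.Prime) (hdvd : p ∣ m + prodPrimesFrom j₀ T) :
    p ≤ Nat.nth Nat.Prime (j₀ - 1) + m ∨ Nat.nth Nat.Prime ⌊T⌋₊ ≤ p := by
  by_contra! h
  have hpm : p ∣ m :=
    (Nat.dvd_add_left (prime_dvd_prodPrimesFrom j₀ T hp (by omega) h.2)).mp hdvd
  have := Nat.le_of_dvd hm hpm
  omega

theorem sum_one_div_primeFactors_ge_nth_prime_floor_le (m : ℕ) {j₀ : ℕ} (hj₀ : 1 ≤ j₀) {T : ℝ}
    (hT : 1 < T) :
    ∑ q ∈ (m + prodPrimesFrom j₀ T).primeFactors with Nat.nth Nat.Prime ⌊T⌋₊ ≤ q, (1 : ℝ) / q ≤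
      Real.log (4 * (m + 1)) / Real.log T := by
  have hbT := lt_nth_prime_floor T
  calc _ ≤ Real.log (4 * (m + 1)) / Real.log (Nat.nth Nat.Prime ⌊T⌋₊) :=
        sum_one_div_primeFactors_ge_le (Nat.add_pos_right m (prodPrimesFrom_pos j₀ T)).ne'
          (Nat.prime_nth_prime _).one_lt (by exact_mod_cast add_prodPrimesFrom_le_pow m hj₀ T)
    _ ≤ _ := div_le_div_of_nonneg_left (Real.log_nonneg (by linarith [m.cast_nonneg (α := ℝ)]))
        (Real.log_pos hT) (Real.log_le_log (by linarith) hbT.le)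

theorem ncard_residues_le (m j₀ : ℕ) {T : ℕ → ℝ} (hT : ∀ j, 1 ≤ j → (2 : ℝ) ^ j ≤ T j) {p : ℕ}
    (hp : p.Prime) :
    {z : ZMod p | ∃ j, 1 ≤ j ∧ z = ((m + prodPrimesFrom j₀ (T j) : ℕ) : ZMod p)}.ncard ≤
      Nat.nth Nat.Prime (j₀ - 1) + 1 + Nat.log 2 p := by
  have := Fact.mk hp
  rcases lt_or_ge p (Nat.nth Nat.Prime (j₀ - 1)) with hsmall | hlarge
  · exact ((Set.ncard_le_card _).trans_eq (Nat.card_zmod p)).trans (by omega)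
  refine (ncard_setOf_exists_eq_le _ (m : ZMod p) (Nat.log 2 p) fun j hj => ?_).trans (by omega)
  have hpT : (p : ℝ) < T j :=
    calc (p : ℝ) < 2 ^ (Nat.log 2 p + 1) := by exact_mod_cast Nat.lt_pow_succ_log_self one_lt_two p
      _ ≤ 2 ^ j := pow_le_pow_right₀ one_le_two hj
      _ ≤ T j := hT j (by omega)
  have hdvd := prime_dvd_prodPrimesFrom j₀ (T j) hp hlarge
    (by exact_mod_cast hpT.trans (lt_nth_prime_floor (T j)))
  rw [Nat.cast_add, (ZMod.natCast_eq_zero_iff _ _).mpr hdvd, add_zero]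

theorem summable_one_div_primes_dvd_add_prodPrimesFrom {m : ℕ} (hm : 1 ≤ m) {j₀ : ℕ}
    (hj₀ : 1 ≤ j₀) {T : ℕ → ℝ} (hT : ∀ j, 1 ≤ j → 1 < T j)
    (hsum : Summable fun j => 1 / Real.log (T j)) :
    Summable fun q : {p | p.Prime ∧ ∃ j, 1 ≤ j ∧ p ∣ m + prodPrimesFrom j₀ (T j)} =>
      1 / (q : ℝ) := by
  set F := Set.Iic (Nat.nth Nat.Prime (j₀ - 1) + m)
  set S : {j : ℕ // 1 ≤ j} → Finset ℕ := fun j =>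
    {q ∈ (m + prodPrimesFrom j₀ (T j)).primeFactors | Nat.nth Nat.Prime ⌊T j⌋₊ ≤ q}
  set B := {p | p.Prime ∧ ∃ j, 1 ≤ j ∧ p ∣ m + prodPrimesFrom j₀ (T j)}
  set f : ℕ → ℝ := fun q => 1 / q
  have hf : 0 ≤ f := fun q => by positivity
  have hFsum : Summable (F.indicator f) :=
    summable_of_ne_finset_zero (s := Finset.Iic (Nat.nth Nat.Prime (j₀ - 1) + m)) fun q hq =>
      Set.indicator_of_notMem (by simpa [F] using hq) _
  have hSsum : Summable ((⋃ j, (S j : Set ℕ)).indicator f) :=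
    summable_indicator_iUnion_of_sum_le hf
      ((hsum.subtype _).mul_left (Real.log (4 * (m + 1)))) fun j =>
        (sum_one_div_primeFactors_ge_nth_prime_floor_le m hj₀ (hT j j.2)).trans_eq
          (mul_one_div _ _).symm
  refine (summable_subtype_iff_indicator (f := f)).mpr <|
    (hFsum.add hSsum).of_nonneg_of_le (Set.indicator_nonneg fun q _ => hf q) fun p => ?_
  have hF0 := Set.indicator_nonneg (s := F) (fun q _ => hf q) p
  have hS0 := Set.indicator_nonneg (s := ⋃ j, (S j : Set ℕ)) (fun q _ => hf q) p
  by_cases hpB : p ∈ B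
  · obtain ⟨hp, j, hj, hdvd⟩ := id hpB
    rw [Set.indicator_of_mem hpB]
    rcases prime_dvd_add_prodPrimesFrom_le_or_ge hm j₀ (T j) hp hdvd with h | h
    · rw [Set.indicator_of_mem (Set.mem_Iic.mpr h)]; linarith
    · have hpS : p ∈ S ⟨j, hj⟩ := Finset.mem_filter.mpr ⟨Nat.mem_primeFactors.mpr
        ⟨hp, hdvd, (Nat.add_pos_right m (prodPrimesFrom_pos j₀ (T j))).ne'⟩, h⟩
      rw [Set.indicator_of_mem (Set.mem_iUnion.mpr ⟨⟨j, hj⟩, hpS⟩)]; linarith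
  · rw [Set.indicator_of_notMem hpB]; linarith

theorem statement3 (η : ℝ) (hη : 1 < η) (m j₀ : ℕ) (hm : 1 ≤ m) (hj₀ : 1 ≤ j₀) :
    Lacunary {r : ℝ | ∃ j : ℕ, 1 ≤ j ∧
        r = Real.sqrt ((m : ℝ) + (prodPrimesFrom j₀ ((2 : ℝ) ^ ((j : ℝ) ^ η)) : ℝ))} ∧
    ∃ G B : Set ℕ,
      (∀ p : ℕ, p.Prime → p ∈ G ∪ B) ∧
      (∀ p ∈ G, Nat.Prime p) ∧ (∀ p ∈ B, Nat.Prime p) ∧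
      (∀ p ∈ G, ∀ j : ℕ, 1 ≤ j →
        IsUnit (((m + prodPrimesFrom j₀ ((2 : ℝ) ^ ((j : ℝ) ^ η)) : ℕ) : ZMod p))) ∧
      (∀ ε : ℝ, 0 < ε → ∃ C : ℝ, 0 < C ∧ ∀ p ∈ G,
        (({z : ZMod p | ∃ j : ℕ, 1 ≤ j ∧
            z = ((m + prodPrimesFrom j₀ ((2 : ℝ) ^ ((j : ℝ) ^ η)) : ℕ) : ZMod p)}.ncard : ℝ))
          ≤ C * (p : ℝ) ^ ε) ∧
      Summable (fun q : B => 1 / (q : ℝ)) := by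
  set T : ℕ → ℝ := fun j => (2 : ℝ) ^ ((j : ℝ) ^ η)
  have hT_ge : ∀ j, 1 ≤ j → (2 : ℝ) ^ j ≤ T j := fun j hj => by
    rw [← Real.rpow_natCast]
    exact Real.rpow_le_rpow_of_exponent_le one_le_two
      (Real.self_le_rpow_of_one_le (by exact_mod_cast hj) hη.le)
  have hT_log : ∀ j, Real.log (T j) = (j : ℝ) ^ η * Real.log 2 := fun j =>
    Real.log_rpow two_pos _
  refine ⟨lacunary_of_subset_range_sqrt m (fun j => prodPrimesFrom_pos j₀ (T j))
    (fun i j => (le_total (T i) (T j)).imp (prodPrimesFrom_dvd_of_le j₀)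
      (prodPrimesFrom_dvd_of_le j₀))
    fun r ⟨j, _, hr⟩ => ⟨j, hr.symm⟩, ?_⟩
  refine ⟨{p | p.Prime ∧ ∀ j, 1 ≤ j → ¬ p ∣ m + prodPrimesFrom j₀ (T j)},
    {p | p.Prime ∧ ∃ j, 1 ≤ j ∧ p ∣ m + prodPrimesFrom j₀ (T j)}, fun p hp => ?_,
    fun p hp => hp.1, fun p hp => hp.1, fun p ⟨hp, hndvd⟩ j hj => ?_, fun ε hε => ?_, ?_⟩
  · by_cases h : ∀ j, 1 ≤ j → ¬ p ∣ m + prodPrimesFrom j₀ (T j)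
    · exact Or.inl ⟨hp, h⟩
    · push Not at h
      exact Or.inr ⟨hp, h⟩
  · exact (ZMod.isUnit_iff_coprime _ _).mpr (hp.coprime_iff_not_dvd.mpr (hndvd j hj)).symm
  · refine ⟨Nat.nth Nat.Prime (j₀ - 1) + 1 + 1 / (ε * Real.log 2), by positivity, fun p hp => ?_⟩
    calc _ ≤ ((Nat.nth Nat.Prime (j₀ - 1) + 1 : ℕ) : ℝ) + Nat.log 2 p := by
          exact_mod_cast ncard_residues_le m j₀ hT_ge hp.1
      _ ≤ _ := by
          exact_mod_cast add_natLog_two_le_mul_rpow hε (Nat.cast_nonneg _) hp.1.one_lt.le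
  · refine summable_one_div_primes_dvd_add_prodPrimesFrom hm hj₀
      (fun j hj => Real.one_lt_rpow one_lt_two (by positivity)) ?_
    simp_rw [hT_log, ← one_div_mul_one_div]
    exact (Real.summable_one_div_nat_rpow.mpr hη).mul_right _

end
end

section
/- Fix a real η > 1, let p_i denote the i-th prime, and for j ∈ ℕ≥1 set n_j := 1 + ∏_{i ≤ 2^{j^η}} p_i. There exists a constant C > 0 such that for every prime p, the number of distinct residues #{n_j mod p : j ∈ ℕ≥1} is at most C·log p. -/
open scoped ENNReal NNReal BigOperators
open MeasureTheory

noncomputable section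

theorem statement4 (η : ℝ) (hη : 1 < η) :
    ∃ C : ℝ, 0 < C ∧ ∀ p : ℕ, p.Prime →
      (({z : ZMod p | ∃ j : ℕ, 1 ≤ j ∧ z = ((nseq η j : ℕ) : ZMod p)}.ncard : ℝ))
        ≤ C * Real.log p := by
  have hlog2 : (0:ℝ) < Real.log 2 := Real.log_pos (by norm_num)
  refine ⟨4 / Real.log 2, by positivity, ?_⟩
  intro p hp
  set k := Nat.count Nat.Prime p with hk
  set J : ℕ := ⌈Real.logb 2 ((k:ℝ)+1)⌉₊ + 1 with hJ
  have hlogb0 : 0 ≤ Real.logb 2 ((k:ℝ)+1) := by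
    apply Real.logb_nonneg (by norm_num)
    have : (0:ℝ) ≤ (k:ℝ) := Nat.cast_nonneg k
    linarith
  -- the set is contained in a finite set of size ≤ J + 1
  have hsub : {z : ZMod p | ∃ j : ℕ, 1 ≤ j ∧ z = ((nseq η j : ℕ) : ZMod p)} ⊆
      ↑(insert (1 : ZMod p) ((Finset.Icc 1 J).image
        (fun j => ((nseq η j : ℕ) : ZMod p)))) := by
    rintro z ⟨j, hj1, rfl⟩
    by_cases hjJ : j ≤ J
    · exact Finset.mem_coe.2 (Finset.mem_insert_of_mem
        (Finset.mem_image_of_mem _ (Finset.mem_Icc.2 ⟨hj1, hjJ⟩)))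
    · suffices h : ((nseq η j : ℕ) : ZMod p) = 1 by
        rw [h]; exact Finset.mem_coe.2 (Finset.mem_insert_self _ _)
      have hdvd : p ∣ primorialUpTo ((2:ℝ) ^ ((j:ℝ) ^ η)) := by
        have hjJ' : (J:ℝ) ≤ (j:ℝ) := by
          exact_mod_cast le_of_lt (not_le.1 hjJ)
        have h1j : (1:ℝ) ≤ (j:ℝ) := by exact_mod_cast hj1
        have hje : (j:ℝ) ≤ (j:ℝ) ^ η := by
          calc (j:ℝ) = (j:ℝ) ^ (1:ℝ) := (Real.rpow_one _).symm
          _ ≤ (j:ℝ) ^ η := Real.rpow_le_rpow_of_exponent_le h1j hη.le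
        have h2 : ((k:ℝ)+1) ≤ (2:ℝ) ^ ((j:ℝ) ^ η) := by
          have hc : Real.logb 2 ((k:ℝ)+1) ≤ (j:ℝ) ^ η := by
            calc Real.logb 2 ((k:ℝ)+1) ≤ (⌈Real.logb 2 ((k:ℝ)+1)⌉₊ : ℝ) :=
              Nat.le_ceil _
            _ ≤ (J:ℝ) := by rw [hJ]; push_cast; linarith
            _ ≤ (j:ℝ) := hjJ'
            _ ≤ (j:ℝ) ^ η := hje
          calc ((k:ℝ)+1) = (2:ℝ) ^ Real.logb 2 ((k:ℝ)+1) := by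
                rw [Real.rpow_logb (by positivity) (by norm_num) (by positivity)]
          _ ≤ (2:ℝ) ^ ((j:ℝ) ^ η) :=
              Real.rpow_le_rpow_of_exponent_le (by norm_num) hc
        have hk' : k < ⌊(2:ℝ) ^ ((j:ℝ) ^ η)⌋₊ := by
          have hfl : (k + 1 : ℕ) ≤ ⌊(2:ℝ) ^ ((j:ℝ) ^ η)⌋₊ :=
            Nat.le_floor (by push_cast; exact h2)
          omega
        have hmem : k ∈ Finset.range ⌊(2:ℝ) ^ ((j:ℝ) ^ η)⌋₊ := Finset.mem_range.2 hk'
        have hdvd2 : Nat.nth Nat.Prime k ∣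
            ∏ i ∈ Finset.range ⌊(2:ℝ) ^ ((j:ℝ) ^ η)⌋₊, Nat.nth Nat.Prime i :=
          Finset.dvd_prod_of_mem _ hmem
        rw [primorialUpTo]
        rwa [show Nat.nth Nat.Prime k = p from Nat.nth_count hp] at hdvd2
      have hzero : ((primorialUpTo ((2:ℝ) ^ ((j:ℝ) ^ η)) : ℕ) : ZMod p) = 0 :=
        (ZMod.natCast_eq_zero_iff _ _).2 hdvd
      rw [nseq]
      push_cast
      rw [hzero]
      ring
  have hfin : (↑(insert (1 : ZMod p) ((Finset.Icc 1 J).image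
      (fun j => ((nseq η j : ℕ) : ZMod p)))) : Set (ZMod p)).Finite :=
    Finset.finite_toSet _
  have hcard : {z : ZMod p | ∃ j : ℕ, 1 ≤ j ∧ z = ((nseq η j : ℕ) : ZMod p)}.ncard
      ≤ J + 1 := by
    calc {z : ZMod p | ∃ j : ℕ, 1 ≤ j ∧ z = ((nseq η j : ℕ) : ZMod p)}.ncard
        ≤ (↑(insert (1 : ZMod p) ((Finset.Icc 1 J).image
            (fun j => ((nseq η j : ℕ) : ZMod p)))) : Set (ZMod p)).ncard :=
          Set.ncard_le_ncard hsub hfin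
      _ = (insert (1 : ZMod p) ((Finset.Icc 1 J).image
            (fun j => ((nseq η j : ℕ) : ZMod p)))).card := Set.ncard_coe_finset _
      _ ≤ ((Finset.Icc 1 J).image (fun j => ((nseq η j : ℕ) : ZMod p))).card + 1 :=
          Finset.card_insert_le _ _
      _ ≤ (Finset.Icc 1 J).card + 1 := by
          exact Nat.add_le_add_right (Finset.card_image_le) 1
      _ = J + 1 := by rw [Nat.card_Icc]; omega
  -- numeric bound
  have hkp : k < p := by
    rw [hk, Nat.count_eq_card_filter_range]
    have hss : Finset.filter Nat.Prime (Finset.range p) ⊂ Finset.range p := by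
      refine (Finset.ssubset_iff_of_subset (Finset.filter_subset _ _)).2 ?_
      exact ⟨0, Finset.mem_range.2 hp.pos, by simp [Nat.not_prime_zero]⟩
    have := Finset.card_lt_card hss
    simpa using this
  have hL : Real.log 2 ≤ Real.log p :=
    Real.log_le_log (by norm_num) (by exact_mod_cast hp.two_le)
  have hlogk : Real.log ((k:ℝ)+1) ≤ Real.log p := by
    apply Real.log_le_log (by positivity)
    have : (k:ℝ)+1 ≤ (p:ℝ) := by exact_mod_cast hkp
    exact this
  have hceil : (⌈Real.logb 2 ((k:ℝ)+1)⌉₊ : ℝ) ≤ Real.logb 2 ((k:ℝ)+1) + 1 :=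
    le_of_lt (Nat.ceil_lt_add_one hlogb0)
  have hJle : (J:ℝ) + 1 ≤ Real.logb 2 ((k:ℝ)+1) + 3 := by
    rw [hJ]; push_cast; linarith
  have hlogbk : Real.logb 2 ((k:ℝ)+1) ≤ Real.log p / Real.log 2 := by
    rw [Real.logb]
    exact div_le_div_of_nonneg_right hlogk hlog2.le |>.trans_eq rfl
  have h3 : (3:ℝ) ≤ 3 * Real.log p / Real.log 2 := by
    rw [le_div_iff₀ hlog2]; nlinarith
  calc (({z : ZMod p | ∃ j : ℕ, 1 ≤ j ∧ z = ((nseq η j : ℕ) : ZMod p)}.ncard : ℝ))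
      ≤ (J:ℝ) + 1 := by exact_mod_cast hcard
    _ ≤ Real.logb 2 ((k:ℝ)+1) + 3 := hJle
    _ ≤ Real.log p / Real.log 2 + 3 := by linarith
    _ ≤ Real.log p / Real.log 2 + 3 * Real.log p / Real.log 2 := by linarith
    _ = 4 / Real.log 2 * Real.log p := by field_simp; ring

end
end

section
/- Fix a real η > 1, let p_i denote the i-th prime, and for j ∈ ℕ≥1 set n_j := 1 + ∏_{i ≤ 2^{j^η}} p_i. Let B := {2} ∪ {p prime : p divides n_j for some j ∈ ℕ≥1}. Then the series ∑_{p ∈ B} 1/p converges. -/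
open scoped ENNReal NNReal BigOperators
open MeasureTheory

noncomputable section

/-! All prime factors of `1 + m#` exceed `m`, while `1 + m# ≤ 4 ^ (m + 1)`; so there are at most
`(m + 1) log 4 / log (m + 1)` of them, and the sum of their reciprocals is at most
`log 4 / log (m + 1)`. For `n_j` the number `m + 1` is a prime larger than `2 ^ j ^ η`, which
gives the bound `2 / j ^ η`, summable over `j` since `η > 1`. -/

open Finset Nat

lemma prod_range_nth_prime (T : ℕ) :
    ∏ i ∈ range T, nth Nat.Prime i = primorial (nth Nat.Prime T - 1) := by
  rw [primorial_eq_prod_primesLE, ← primesBelow_eq_primesLE_sub_one]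
  induction T with
  | zero => simp [nth_prime_zero_eq_two, primesBelow_two]
  | succ k ih =>
    rw [prod_range_succ, ih, primesBelow, primesBelow,
      filter_range_nth_eq_insert_of_infinite (p := Nat.Prime) infinite_setOfPred_prime,
      prod_insert (by simp), mul_comm]

lemma lt_of_prime_dvd_one_add_primorial {p m : ℕ} (hp : p.Prime) (h : p ∣ 1 + primorial m) :
    m < p := by
  by_contra! hpm
  exact hp.not_dvd_one <| (Nat.dvd_add_left (hp.dvd_primorial_iff.2 hpm)).1 h

lemma one_add_primorial_le (m : ℕ) : 1 + primorial m ≤ 4 ^ (m + 1) := by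
  have := primorial_le_four_pow m
  have := Nat.one_le_pow m 4 (by norm_num)
  rw [pow_succ]
  omega

lemma sum_inv_primeFactors_le {N Q : ℕ} (hQ : 1 < Q) (h : ∀ p ∈ N.primeFactors, Q ≤ p) :
    ∑ p ∈ N.primeFactors, (1 : ℝ) / p ≤ Real.log N / (Q * Real.log Q) := by
  rcases eq_or_ne N 0 with rfl | hN
  · simp
  have hlogQ : 0 < Real.log Q := Real.log_pos (by exact_mod_cast hQ)
  have hcard : (#N.primeFactors : ℝ) * Real.log Q ≤ Real.log N := by
    rw [← Real.log_pow]
    refine Real.log_le_log (by positivity) ?_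
    exact_mod_cast (pow_card_le_prod _ _ _ h).trans
      (Nat.le_of_dvd (Nat.pos_of_ne_zero hN) (prod_primeFactors_dvd N))
  calc ∑ p ∈ N.primeFactors, (1 : ℝ) / p ≤ #N.primeFactors • (1 / (Q : ℝ)) :=
        sum_le_card_nsmul _ _ _ fun p hp ↦
          one_div_le_one_div_of_le (by positivity) (by exact_mod_cast h p hp)
    _ = #N.primeFactors / Q := by rw [nsmul_eq_mul, mul_one_div]
    _ ≤ Real.log N / Real.log Q / Q := by gcongr; rwa [le_div_iff₀ hlogQ]
    _ = Real.log N / (Q * Real.log Q) := by rw [div_div, mul_comm]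

lemma sum_inv_primeFactors_one_add_primorial_le {m : ℕ} (hm : 1 ≤ m) :
    ∑ p ∈ (1 + primorial m).primeFactors, (1 : ℝ) / p ≤ Real.log 4 / Real.log (m + 1) := by
  have hlog : 0 < Real.log (m + 1) := Real.log_pos (by norm_cast; omega)
  calc ∑ p ∈ (1 + primorial m).primeFactors, (1 : ℝ) / p
      ≤ Real.log (1 + primorial m : ℕ) / ((m + 1 : ℕ) * Real.log (m + 1 : ℕ)) :=
        sum_inv_primeFactors_le (by omega) fun p hp ↦ lt_of_prime_dvd_one_add_primorial
          (prime_of_mem_primeFactors hp) (dvd_of_mem_primeFactors hp)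
    _ ≤ Real.log (4 ^ (m + 1) : ℕ) / ((m + 1 : ℕ) * Real.log (m + 1 : ℕ)) := by
        push_cast
        gcongr
        exact_mod_cast one_add_primorial_le m
    _ = Real.log 4 / Real.log (m + 1) := by
        rw [Nat.cast_pow, Real.log_pow]
        push_cast
        field_simp

lemma nseq_eq_one_add_primorial (η : ℝ) (j : ℕ) :
    nseq η j = 1 + primorial (nth Nat.Prime ⌊(2 : ℝ) ^ ((j : ℝ) ^ η)⌋₊ - 1) := by
  rw [nseq, primorialUpTo, prod_range_nth_prime]

lemma sum_inv_primeFactors_nseq_le (η : ℝ) {j : ℕ} (hj : 1 ≤ j) :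
    ∑ p ∈ (nseq η j).primeFactors, (1 : ℝ) / p ≤ 2 * ((j : ℝ) ^ η)⁻¹ := by
  set x : ℝ := (2 : ℝ) ^ ((j : ℝ) ^ η)
  set Q := nth Nat.Prime ⌊x⌋₊
  have hQ : 2 ≤ Q := (prime_nth_prime _).two_le
  have hxQ : x ≤ Q := by
    have : ⌊x⌋₊ + 1 ≤ Q := by have := add_two_le_nth_prime ⌊x⌋₊; omega
    calc x ≤ ⌊x⌋₊ + 1 := (Nat.lt_floor_add_one x).le
      _ ≤ Q := by exact_mod_cast this
  have hlogQ : (j : ℝ) ^ η * Real.log 2 ≤ Real.log Q := by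
    rw [← Real.log_rpow two_pos]
    exact Real.log_le_log (by positivity) hxQ
  rw [nseq_eq_one_add_primorial]
  calc _ ≤ Real.log 4 / Real.log ((Q - 1 : ℕ) + 1) :=
        sum_inv_primeFactors_one_add_primorial_le (by omega)
    _ = Real.log 4 / Real.log Q := by rw [Nat.cast_sub (by omega), Nat.cast_one, sub_add_cancel]
    _ ≤ Real.log 4 / ((j : ℝ) ^ η * Real.log 2) := by gcongr
    _ = 2 * ((j : ℝ) ^ η)⁻¹ := by
        rw [show (4 : ℝ) = 2 ^ 2 by norm_num, Real.log_pow]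
        field_simp
        ring

lemma summable_subtype_of_subset_iUnion {α ι : Type*} {f : α → ℝ} (hf : 0 ≤ f) {s : Set α}
    (t : ι → Finset α) (hs : s ⊆ ⋃ i, (t i : Set α))
    (ht : Summable fun i ↦ ∑ a ∈ t i, f a) :
    Summable fun a : s ↦ f a := by
  classical
  choose i hi using fun a : s ↦ Set.mem_iUnion.mp (hs a.2)
  refine summable_of_sum_le (c := ∑' k, ∑ a ∈ t k, f a) (fun a ↦ hf a) fun u ↦ ?_
  calc ∑ a ∈ u, f a = ∑ k ∈ u.image i, ∑ a ∈ u with i a = k, f a :=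
        (sum_fiberwise_of_maps_to (fun a ha ↦ mem_image_of_mem i ha) _).symm
    _ ≤ ∑ k ∈ u.image i, ∑ a ∈ t k, f a := by
        refine sum_le_sum fun k _ ↦ ?_
        refine (sum_map _ (Function.Embedding.subtype _) f).symm.trans_le
          (sum_le_sum_of_subset_of_nonneg ?_ fun a _ _ ↦ hf a)
        intro a ha
        simp only [mem_map, mem_filter, Function.Embedding.subtype_apply] at ha
        obtain ⟨b, ⟨-, rfl⟩, rfl⟩ := ha
        exact hi b
    _ ≤ ∑' k, ∑ a ∈ t k, f a := ht.sum_le_tsum _ fun k _ ↦ sum_nonneg fun a _ ↦ hf a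

theorem statement5 (η : ℝ) (hη : 1 < η) :
    Summable (fun q : ({2} ∪ {p : ℕ | p.Prime ∧ ∃ j : ℕ, 1 ≤ j ∧ p ∣ nseq η j} : Set ℕ) =>
      1 / (q : ℝ)) := by
  let t : ℕ → Finset ℕ := fun j ↦ if j = 0 then {2} else (nseq η j).primeFactors
  refine summable_subtype_of_subset_iUnion (f := fun p : ℕ ↦ 1 / (p : ℝ))
    (fun p ↦ by positivity) t ?_ ?_
  · rintro p (rfl | ⟨hp, j, hj, hdvd⟩)
    · exact Set.mem_iUnion.2 ⟨0, by simp [t]⟩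
    · refine Set.mem_iUnion.2 ⟨j, ?_⟩
      simp only [t, if_neg (by omega : j ≠ 0), mem_coe, mem_primeFactors]
      exact ⟨hp, hdvd, by unfold nseq; omega⟩
  · refine ((Real.summable_nat_rpow_inv.2 hη).mul_left 2).of_norm_bounded_eventually_nat ?_
    filter_upwards [Filter.eventually_ge_atTop 1] with j hj
    rw [Real.norm_of_nonneg (sum_nonneg fun p _ ↦ by positivity)]
    simpa only [t, if_neg (by omega : j ≠ 0)] using sum_inv_primeFactors_nseq_le η hj

end
end

section
/- Let d ≥ 1 be an integer. For every integer q ≥ 1, every N ∈ ℤ and every n ∈ ℤ^d, the normalized Kloosterman sum satisfies |K(q,N;n)| ≤ 2^{d/2}·q^{1−d/2}. -/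
open scoped ENNReal NNReal BigOperators
open MeasureTheory

noncomputable section

/-! For a unit `u` mod `q`, the quadratic Gauss sum `G = ∑_x e((u x² + m x)/q)` satisfies
`|G|² = ∑_{x,h} e((f(x+h) - f(x))/q)` with `f(x) = u x² + m x`, and `f(x+h) - f(x) = 2uh·x + f(h)`
is linear in `x`, so the sum over `x` vanishes unless `2h ≡ 0 (mod q)`: at most two values of `h`
survive, each contributing `q`, whence `|G| ≤ √(2q)`. The sum over `b ∈ (ℤ/qℤ)^d` in `K(q,N;n)`
is a product of `d` such sums, and bounding the sum over the at most `q` units `u` trivially gives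
`|K(q,N;n)| ≤ q^{-d} · q · (2q)^{d/2}`. -/

open Finset

section QuadraticGaussSum

variable {R : Type*} [CommRing R] [Fintype R] [DecidableEq R]

def quadGaussSum (ψ : AddChar R ℂ) (a m : R) : ℂ := ∑ x, ψ (a * x ^ 2 + m * x)

theorem conj_mul_quadGaussSum {ψ : AddChar R ℂ} (hψ : ψ.IsPrimitive) (a m : R) :
    starRingEnd ℂ (quadGaussSum ψ a m) * quadGaussSum ψ a m
      = Fintype.card R * ∑ h with 2 * a * h = 0, ψ (a * h ^ 2 + m * h) := by
  have hshift (x h : R) :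
      starRingEnd ℂ (ψ (a * x ^ 2 + m * x)) * ψ (a * (x + h) ^ 2 + m * (x + h))
        = ψ (a * h ^ 2 + m * h) * ψ (x * (2 * a * h)) := by
    rw [← AddChar.map_neg_eq_conj, ← AddChar.map_add_eq_mul, ← AddChar.map_add_eq_mul]
    ring_nf
  calc starRingEnd ℂ (quadGaussSum ψ a m) * quadGaussSum ψ a m
      = ∑ x, ∑ h,
          starRingEnd ℂ (ψ (a * x ^ 2 + m * x)) * ψ (a * (x + h) ^ 2 + m * (x + h)) := by
        rw [quadGaussSum, map_sum, sum_mul]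
        refine sum_congr rfl fun x _ => ?_
        rw [mul_sum, ← Equiv.sum_comp (Equiv.addLeft x)]
        rfl
    _ = ∑ h, ψ (a * h ^ 2 + m * h) * ∑ x, ψ (x * (2 * a * h)) := by
        simp only [hshift, mul_sum]
        exact sum_comm
    _ = _ := by
        rw [mul_sum, sum_filter]
        refine sum_congr rfl fun h _ => ?_
        rw [AddChar.sum_mulShift _ hψ]
        split_ifs <;> simp [mul_comm]

theorem norm_quadGaussSum_sq_le {ψ : AddChar R ℂ} (hψ : ψ.IsPrimitive) (a m : R) :
    ‖quadGaussSum ψ a m‖ ^ 2 ≤ Fintype.card R * #{h | 2 * a * h = 0} := by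
  calc ‖quadGaussSum ψ a m‖ ^ 2
      = ‖starRingEnd ℂ (quadGaussSum ψ a m) * quadGaussSum ψ a m‖ := by
        rw [norm_mul, Complex.norm_conj, sq]
    _ ≤ Fintype.card R * ∑ h with 2 * a * h = 0, ‖ψ (a * h ^ 2 + m * h)‖ := by
        rw [conj_mul_quadGaussSum hψ, norm_mul, Complex.norm_natCast]
        gcongr
        exact norm_sum_le _ _
    _ = _ := by simp [AddChar.norm_apply]

end QuadraticGaussSum

theorem ZMod.card_two_mul_eq_zero_le (q : ℕ) [NeZero q] : #{h : ZMod q | 2 * h = 0} ≤ 2 := by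
  simpa [two_nsmul, two_mul] using IsAddCyclic.card_nsmul_eq_zero_le (α := ZMod q) two_pos

theorem norm_quadGaussSum_stdAddChar_le (q : ℕ) [NeZero q] {a : ZMod q} (ha : IsUnit a)
    (m : ZMod q) : ‖quadGaussSum ZMod.stdAddChar a m‖ ≤ √(2 * q) := by
  have hcard : #{h : ZMod q | 2 * a * h = 0} = #{h : ZMod q | 2 * h = 0} := by
    congr 1
    ext h
    simp [mul_right_comm _ a, ha.mul_left_eq_zero]
  refine Real.le_sqrt_of_sq_le ?_
  calc ‖quadGaussSum ZMod.stdAddChar a m‖ ^ 2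
      ≤ q * #{h : ZMod q | 2 * a * h = 0} := by
        simpa using norm_quadGaussSum_sq_le (ZMod.isPrimitive_stdAddChar q) a m
    _ ≤ q * 2 := by
        rw [hcard]
        gcongr
        exact_mod_cast ZMod.card_two_mul_eq_zero_le q
    _ = 2 * q := mul_comm _ _

theorem norm_eC (t : ℝ) : ‖eC t‖ = 1 := by
  rw [eC, show 2 * (Real.pi : ℂ) * Complex.I * t = ((2 * Real.pi * t : ℝ) : ℂ) * Complex.I by
    push_cast; ring]
  exact Complex.norm_exp_ofReal_mul_I _

theorem eC_sum {ι : Type*} (s : Finset ι) (f : ι → ℝ) :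
    eC (∑ i ∈ s, f i) = ∏ i ∈ s, eC (f i) := by
  simp only [eC, Complex.ofReal_sum, mul_sum, Complex.exp_sum]

theorem eC_intCast_div (q : ℕ) [NeZero q] (k : ℤ) :
    eC (k / q) = ZMod.stdAddChar (k : ZMod q) := by
  rw [ZMod.stdAddChar_coe, eC]
  push_cast
  ring_nf

theorem ZMod.sum_fin_natCast (q : ℕ) [NeZero q] {M : Type*} [AddCommMonoid M]
    (g : ZMod q → M) : ∑ x : Fin q, g (x : ℕ) = ∑ x, g x := by
  obtain ⟨k, rfl⟩ := Nat.exists_eq_succ_of_ne_zero (NeZero.ne q)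
  exact Fintype.sum_congr _ _ fun x => congrArg g (Fin.cast_val_eq_self x)

theorem sum_eC_quadratic_eq_prod_quadGaussSum (d q : ℕ) [NeZero q] (u : ℕ) (n : Fin d → ℤ) :
    ∑ b : Fin d → Fin q,
        eC (((u : ℝ) * ∑ i, ((b i : ℕ) : ℝ) ^ 2 + ∑ i, ((b i : ℕ) : ℝ) * (n i : ℝ)) / q)
      = ∏ i, quadGaussSum ZMod.stdAddChar (u : ZMod q) (n i) := by
  have hterm (b : Fin d → Fin q) :
      eC (((u : ℝ) * ∑ i, ((b i : ℕ) : ℝ) ^ 2 + ∑ i, ((b i : ℕ) : ℝ) * (n i : ℝ)) / q)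
        = ∏ i, ZMod.stdAddChar
            ((u : ZMod q) * ((b i : ℕ) : ZMod q) ^ 2 + (n i : ZMod q) * ((b i : ℕ) : ZMod q)) := by
    rw [show ((u : ℝ) * ∑ i, ((b i : ℕ) : ℝ) ^ 2 + ∑ i, ((b i : ℕ) : ℝ) * (n i : ℝ)) / q
        = ∑ i, ((((u : ℤ) * ((b i : ℕ) : ℤ) ^ 2 + n i * ((b i : ℕ) : ℤ) : ℤ) : ℝ) / q) by
      push_cast
      rw [← sum_div, mul_sum, ← sum_add_distrib]
      simp only [mul_comm]]
    simp only [eC_sum, eC_intCast_div]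
    push_cast
    rfl
  simp only [hterm, quadGaussSum]
  rw [← Fintype.prod_sum fun i (x : Fin q) =>
    ZMod.stdAddChar ((u : ZMod q) * ((x : ℕ) : ZMod q) ^ 2 + (n i : ZMod q) * ((x : ℕ) : ZMod q))]
  exact prod_congr rfl fun i _ =>
    ZMod.sum_fin_natCast q fun x => ZMod.stdAddChar ((u : ZMod q) * x ^ 2 + (n i : ZMod q) * x)

theorem norm_kloosterman_le (d q : ℕ) [NeZero q] (N : ℤ) (n : Fin d → ℤ) :
    ‖kloosterman d q N n‖ ≤ (q : ℝ)⁻¹ ^ d * (q * √(2 * q) ^ d) := by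
  rw [kloosterman, norm_mul, norm_pow, norm_inv, Complex.norm_natCast]
  gcongr
  refine (norm_sum_le _ _).trans ((sum_le_card_nsmul _ _ (√(2 * q) ^ d) fun u _ => ?_).trans ?_)
  · split_ifs with hu
    · rw [norm_mul, norm_eC, one_mul, sum_eC_quadratic_eq_prod_quadGaussSum, norm_prod]
      calc ∏ i, ‖quadGaussSum ZMod.stdAddChar (u : ZMod q) (n i)‖ ≤ ∏ _i : Fin d, √(2 * q) :=
            prod_le_prod (fun _ _ => norm_nonneg _) fun i _ =>
              norm_quadGaussSum_stdAddChar_le q ((ZMod.isUnit_iff_coprime _ _).2 hu) _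
        _ = √(2 * q) ^ d := by simp
    · rw [norm_zero]
      positivity
  · simp

theorem inv_pow_mul_mul_sqrt_two_mul_pow {q : ℝ} (hq : 0 < q) (d : ℕ) :
    q⁻¹ ^ d * (q * √(2 * q) ^ d) = 2 ^ ((d : ℝ) / 2) * q ^ (1 - (d : ℝ) / 2) := by
  rw [Real.sqrt_eq_rpow, ← Real.rpow_natCast ((2 * q) ^ (1 / 2 : ℝ)),
    ← Real.rpow_mul (by positivity), Real.mul_rpow zero_le_two hq.le,
    ← Real.rpow_natCast q⁻¹, Real.inv_rpow hq.le, ← Real.rpow_neg hq.le,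
    show 1 - (d : ℝ) / 2 = -d + 1 + 1 / 2 * d by ring,
    Real.rpow_add hq, Real.rpow_add hq, Real.rpow_one]
  ring_nf

theorem statement17_general (d : ℕ) (q : ℕ) (N : ℤ) (n : Fin d → ℤ) :
    ‖kloosterman d q N n‖
      ≤ (2 : ℝ) ^ ((d : ℝ) / 2) * (q : ℝ) ^ (1 - (d : ℝ) / 2) := by
  rcases Nat.eq_zero_or_pos q with rfl | hq
  · simp only [kloosterman, univ_eq_empty, sum_empty, mul_zero, norm_zero]
    positivity
  have : NeZero q := ⟨hq.ne'⟩
  exact (norm_kloosterman_le d q N n).trans_eq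
    (inv_pow_mul_mul_sqrt_two_mul_pow (Nat.cast_pos.2 hq) d)

theorem statement17 (d : ℕ) (hd : 1 ≤ d) (q : ℕ) (hq : 1 ≤ q) (N : ℤ) (n : Fin d → ℤ) :
    ‖kloosterman d q N n‖
      ≤ (2 : ℝ) ^ ((d : ℝ) / 2) * (q : ℝ) ^ (1 - (d : ℝ) / 2) :=
  statement17_general d q N n

end
end
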